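/- Let H be a real Hilbert space, d ≥ 1 an integer, C ⊆ H a nonempty closed convex set with ‖x − y‖ ≤ d for all x, y ∈ C, T_1, …, T_N : C → C nonexpansive (N ≥ 1), and G : C → C a τ-contraction (0 ≤ τ < 1). Let (λ_n) ⊆ (0,1] with moduli χ, φ₃, φ₄ as follows: λ_n ≤ 1/k for all n ≥ χ(k); φ₃(δ, n) ≥ n and Π_{i=n}^{m}(1 − λ_i(1−τ)) ≤ δ for all m ≥ φ₃(δ, n); Σ_{i=φ₄(δ)}^{∞} |λ_{i+N} − λ_i| ≤ δ; and set χ̂(δ) := max{φ₃(δ/(4d), φ₄(δ/(4d)) + N), χ(⌈2Nd/δ⌉)}. Suppose ρ : (0,∞) → (0,∞) satisfies: for every j ∈ {0,…,N−1}, every y ∈ C and every δ > 0, if ‖(T_{[j+N]} ∘ ⋯ ∘ T_{[j+1]})(y) − y‖ ≤ ρ(δ) then ‖T_i(y) − y‖ ≤ δ for all i ∈ {1,…,N}. Let u₀ ∈ C and u_{n+1} := (1−λ_{n+1})·T_{[n+1]}(u_n) + λ_{n+1}·G(T_{[n+1]}(u_n)). Then for every j ∈ {0,…,N−1}, every ε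 > 0 and every n ≥ χ̂(ρ(ε/N)): ‖u_n − (T_{[j+N]} ∘ ⋯ ∘ T_{[j+1]})(u_n)‖ ≤ ε. -/

import Mathlib

open scoped RealInnerProductSpace

/-- `cyc N m` is the unique index in `{1, …, N}` congruent to `m` modulo `N`. -/
def cyc (N m : ℕ) : ℕ := if m % N = 0 then N else m % N

/-- `compShift T N s` is the composition `T [N+s] ∘ ⋯ ∘ T [1+s]`
(apply `T [1+s]` first, then `T [2+s]`, …, finally `T [N+s]`). -/
def compShift {H : Type*} (T : ℕ → H → H) (N s : ℕ) (x : H) : H :=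
  (List.range N).foldl (fun y j => T (cyc N (j + 1 + s)) y) x

/-- `chiHat` is the rate `χ̂(δ) := max{φ₃(δ/(4d), φ₄(δ/(4d)) + N), χ(⌈2Nd/δ⌉)}`. -/
noncomputable def chiHat (d N : ℕ) (χ : ℕ → ℕ) (φ₃ : ℝ → ℕ → ℕ) (φ₄ : ℝ → ℕ) (δ : ℝ) : ℕ :=
  max (φ₃ (δ / (4 * (d : ℝ))) (φ₄ (δ / (4 * (d : ℝ))) + N)) (χ ⌈2 * (N : ℝ) * (d : ℝ) / δ⌉₊)

/-!
The gap `a m = ‖u (m + N) - u m‖` satisfies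
`a (m + 1) ≤ (1 - λ (m + 1) (1 - τ)) a m + d |λ (m + 1 + N) - λ (m + 1)|`, because `u (m + 1 + N)`
and `u (m + 1)` are produced by the same map `T [m + 1]`; unrolling it, `φ₃` and `φ₄` make
`a n ≤ δ / 2`. Each step moves `u` by at most `λ d` away from the plain orbit of the `T`'s, so
by `χ` the point `u (n + N)` is within `δ / 2` of the cyclic composition starting at `[n + 1]`
applied to `u n`. Hence `u n` is a `ρ (ε / N)`-fixed point of that composition, every `T i`
moves it by at most `ε / N`, and so every composition of `N` of them moves it by at most `ε`.
-/

open Finset Set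

theorem cyc_mem_Icc {N : ℕ} (hN : 0 < N) (m : ℕ) : cyc N m ∈ Finset.Icc 1 N := by
  have := Nat.mod_lt m hN
  unfold cyc
  split_ifs <;> simp only [Finset.mem_Icc] <;> omega

theorem cyc_add_self (N m : ℕ) : cyc N (m + N) = cyc N m := by
  simp only [cyc, Nat.add_mod_right]

theorem compShift_mod {H : Type*} (T : ℕ → H → H) (N s : ℕ) :
    compShift T N (s % N) = compShift T N s := by
  have hcyc (j : ℕ) : cyc N (j + 1 + s % N) = cyc N (j + 1 + s) := by
    simp only [cyc, Nat.add_mod_mod]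
  funext x
  simp only [compShift, hcyc]

theorem foldl_range_mem {α : Type*} {C : Set α} {F : ℕ → α → α} (hFm : ∀ i, MapsTo (F i) C C)
    (k : ℕ) {x : α} (hx : x ∈ C) :
    (List.range k).foldl (fun y i => F i y) x ∈ C := by
  induction k with
  | zero => exact hx
  | succ k ih =>
    rw [List.range_succ, List.foldl_concat]
    exact hFm k ih

section Folds

variable {E : Type*} [SeminormedAddCommGroup E] {C : Set E} {F : ℕ → E → E}

theorem norm_sub_foldl_range_le (hFm : ∀ i, MapsTo (F i) C C)
    (hF : ∀ i, ∀ x ∈ C, ∀ y ∈ C, ‖F i x - F i y‖ ≤ ‖x - y‖)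
    {v : ℕ → E} (hv : ∀ k, v k ∈ C) {e : ℕ → ℝ} (he : ∀ k, ‖v (k + 1) - F k (v k)‖ ≤ e k)
    (k : ℕ) :
    ‖v k - (List.range k).foldl (fun y i => F i y) (v 0)‖ ≤ ∑ i ∈ range k, e i := by
  induction k with
  | zero => simp
  | succ k ih =>
    rw [List.range_succ, List.foldl_concat, Finset.sum_range_succ]
    set w := (List.range k).foldl (fun y i => F i y) (v 0)
    calc ‖v (k + 1) - F k w‖ ≤ ‖v (k + 1) - F k (v k)‖ + ‖F k (v k) - F k w‖ :=
          norm_sub_le_norm_sub_add_norm_sub _ _ _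
      _ ≤ e k + ‖v k - w‖ := add_le_add (he k) (hF k _ (hv k) _ (foldl_range_mem hFm k (hv 0)))
      _ ≤ _ := by linarith

end Folds

theorem norm_sub_compShift_le {E : Type*} [SeminormedAddCommGroup E] {C : Set E}
    {N : ℕ} (hN : 0 < N) {T : ℕ → E → E} (hTm : ∀ i ∈ Finset.Icc 1 N, MapsTo (T i) C C)
    (hT : ∀ i ∈ Finset.Icc 1 N, ∀ x ∈ C, ∀ y ∈ C, ‖T i x - T i y‖ ≤ ‖x - y‖)
    {x : E} (hx : x ∈ C) {δ : ℝ} (hTx : ∀ i ∈ Finset.Icc 1 N, ‖T i x - x‖ ≤ δ) (s : ℕ) :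
    ‖x - compShift T N s x‖ ≤ N * δ := by
  have h := norm_sub_foldl_range_le (F := fun i => T (cyc N (i + 1 + s)))
    (fun i => hTm _ (cyc_mem_Icc hN _)) (fun i => hT _ (cyc_mem_Icc hN _)) (v := fun _ => x)
    (fun _ => hx) (e := fun _ => δ)
    (fun i => by rw [norm_sub_rev]; exact hTx _ (cyc_mem_Icc hN _)) N
  simpa [compShift] using h

theorem le_prod_mul_add_sum_of_le_mul_add {a q b : ℕ → ℝ} (hq0 : ∀ i, 0 ≤ q i)
    (hq1 : ∀ i, q i ≤ 1) (hb : ∀ i, 0 ≤ b i) (h : ∀ m, a (m + 1) ≤ q (m + 1) * a m + b (m + 1))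
    {m₀ m : ℕ} (hm : m₀ ≤ m) :
    a m ≤ (∏ i ∈ Icc (m₀ + 1) m, q i) * a m₀ + ∑ i ∈ Icc (m₀ + 1) m, b i := by
  induction m, hm using Nat.le_induction with
  | base => simp
  | succ m hm ih =>
    rw [prod_Icc_succ_top (by omega), sum_Icc_succ_top (by omega)]
    have hS : 0 ≤ ∑ i ∈ Icc (m₀ + 1) m, b i := sum_nonneg fun i _ => hb i
    calc a (m + 1) ≤ q (m + 1) * a m + b (m + 1) := h m
      _ ≤ q (m + 1) * ((∏ i ∈ Icc (m₀ + 1) m, q i) * a m₀ + ∑ i ∈ Icc (m₀ + 1) m, b i)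
          + b (m + 1) := by gcongr; exact hq0 _
      _ ≤ _ := by nlinarith [hq1 (m + 1)]

theorem mul_sum_le_half_of_le_inv_ceil {N : ℕ} (hN : 0 < N) {d δ : ℝ} (hd : 0 < d) (hδ : 0 < δ)
    {f : ℕ → ℝ} (hf : ∀ i ∈ range N, f i ≤ 1 / ⌈2 * (N : ℝ) * d / δ⌉₊) :
    d * ∑ i ∈ range N, f i ≤ δ / 2 := by
  set K := ⌈2 * (N : ℝ) * d / δ⌉₊
  have hK : (0 : ℝ) < K := by
    have : 0 < 2 * (N : ℝ) * d / δ := by positivity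
    exact Nat.cast_pos.2 (Nat.ceil_pos.2 this)
  have hceil : 2 * (N : ℝ) * d ≤ K * δ := (div_le_iff₀ hδ).1 (Nat.le_ceil _)
  calc d * ∑ i ∈ range N, f i ≤ d * (N * (1 / K)) := by
        gcongr
        simpa using sum_le_card_nsmul (range N) f _ hf
    _ ≤ δ / 2 := by
        rw [mul_one_div, mul_div_assoc', div_le_div_iff₀ hK two_pos]
        linarith

/-- The iteration of the theorem is `u (n + 1) = hsdmStep G (lam (n + 1)) (T [n + 1] (u n))`. -/
def hsdmStep {E : Type*} [AddCommGroup E] [Module ℝ E] (G : E → E) (l : ℝ) (y : E) : E :=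
  (1 - l) • y + l • G y

section HSDM

variable {E : Type*} [NormedAddCommGroup E] [NormedSpace ℝ E] {C : Set E} {G : E → E}

theorem hsdmStep_mem (hcv : Convex ℝ C) (hGm : MapsTo G C C) {l : ℝ} (hl0 : 0 ≤ l) (hl1 : l ≤ 1)
    {y : E} (hy : y ∈ C) : hsdmStep G l y ∈ C :=
  hcv hy (hGm hy) (by linarith) hl0 (by ring)

theorem hsdmStep_sub_self (G : E → E) (l : ℝ) (y : E) : hsdmStep G l y - y = l • (G y - y) := by
  unfold hsdmStep; module

theorem norm_hsdmStep_sub_hsdmStep_le {τ l μ : ℝ} (hl0 : 0 ≤ l) (hl1 : l ≤ 1) {x y : E}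
    (hG : ‖G y - G x‖ ≤ τ * ‖y - x‖) :
    ‖hsdmStep G μ y - hsdmStep G l x‖ ≤ (1 - l * (1 - τ)) * ‖y - x‖ + |μ - l| * ‖y - G y‖ := by
  have hsplit : hsdmStep G μ y - hsdmStep G l x =
      (1 - l) • (y - x) + l • (G y - G x) + (l - μ) • (y - G y) := by
    unfold hsdmStep; module
  rw [hsplit]
  have h1 : ‖(1 - l) • (y - x)‖ = (1 - l) * ‖y - x‖ := by
    rw [norm_smul, Real.norm_of_nonneg (by linarith)]
  have h2 : ‖l • (G y - G x)‖ ≤ l * (τ * ‖y - x‖) := by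
    rw [norm_smul, Real.norm_of_nonneg hl0]; exact mul_le_mul_of_nonneg_left hG hl0
  have h3 : ‖(l - μ) • (y - G y)‖ = |μ - l| * ‖y - G y‖ := by
    rw [norm_smul, Real.norm_eq_abs, abs_sub_comm]
  calc _ ≤ ‖(1 - l) • (y - x)‖ + ‖l • (G y - G x)‖ + ‖(l - μ) • (y - G y)‖ := norm_add₃_le
    _ ≤ _ := by rw [h1, h3]; linarith

variable {N : ℕ} {T : ℕ → E → E} {lam : ℕ → ℝ} {u : ℕ → E}

theorem hsdm_mem (hN : 0 < N) (hTm : ∀ i ∈ Finset.Icc 1 N, MapsTo (T i) C C)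
    (hcv : Convex ℝ C) (hGm : MapsTo G C C) (hlam : ∀ n, lam n ∈ Set.Icc 0 1) (hu0 : u 0 ∈ C)
    (hrec : ∀ n, u (n + 1) = hsdmStep G (lam (n + 1)) (T (cyc N (n + 1)) (u n))) (n : ℕ) :
    u n ∈ C := by
  induction n with
  | zero => exact hu0
  | succ n ih =>
    rw [hrec n]
    exact hsdmStep_mem hcv hGm (hlam _).1 (hlam _).2 (hTm _ (cyc_mem_Icc hN _) ih)

theorem norm_hsdm_shift_sub_succ_le (hN : 0 < N) {d τ : ℝ}
    (hbd : ∀ x ∈ C, ∀ y ∈ C, ‖x - y‖ ≤ d) (hTm : ∀ i ∈ Finset.Icc 1 N, MapsTo (T i) C C)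
    (hT : ∀ i ∈ Finset.Icc 1 N, ∀ x ∈ C, ∀ y ∈ C, ‖T i x - T i y‖ ≤ ‖x - y‖)
    (hτ0 : 0 ≤ τ) (hGm : MapsTo G C C) (hG : ∀ x ∈ C, ∀ y ∈ C, ‖G x - G y‖ ≤ τ * ‖x - y‖)
    (hlam : ∀ n, lam n ∈ Set.Icc 0 1) (huC : ∀ n, u n ∈ C)
    (hrec : ∀ n, u (n + 1) = hsdmStep G (lam (n + 1)) (T (cyc N (n + 1)) (u n))) (m : ℕ) :
    ‖u (m + 1 + N) - u (m + 1)‖ ≤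
      (1 - lam (m + 1) * (1 - τ)) * ‖u (m + N) - u m‖ + d * |lam (m + 1 + N) - lam (m + 1)| := by
  set S := T (cyc N (m + 1))
  have hS := cyc_mem_Icc hN (m + 1)
  have hSx : S (u m) ∈ C := hTm _ hS (huC m)
  have hSy : S (u (m + N)) ∈ C := hTm _ hS (huC (m + N))
  have hshift : u (m + 1 + N) = hsdmStep G (lam (m + 1 + N)) (S (u (m + N))) := by
    rw [show m + 1 + N = m + N + 1 by omega, hrec, show m + N + 1 = m + 1 + N by omega,
      cyc_add_self]
  have hq : 0 ≤ 1 - lam (m + 1) * (1 - τ) := by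
    nlinarith [(hlam (m + 1)).1, (hlam (m + 1)).2]
  rw [hshift, hrec m]
  calc _ ≤ (1 - lam (m + 1) * (1 - τ)) * ‖S (u (m + N)) - S (u m)‖
        + |lam (m + 1 + N) - lam (m + 1)| * ‖S (u (m + N)) - G (S (u (m + N)))‖ :=
        norm_hsdmStep_sub_hsdmStep_le (hlam _).1 (hlam _).2 (hG _ hSy _ hSx)
    _ ≤ _ := by
        rw [mul_comm d]
        gcongr
        · exact hT _ hS _ (huC _) _ (huC _)
        · exact hbd _ hSy _ (hGm hSy)

theorem norm_hsdm_sub_compShift_le (hN : 0 < N) {d : ℝ}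
    (hbd : ∀ x ∈ C, ∀ y ∈ C, ‖x - y‖ ≤ d) (hTm : ∀ i ∈ Finset.Icc 1 N, MapsTo (T i) C C)
    (hT : ∀ i ∈ Finset.Icc 1 N, ∀ x ∈ C, ∀ y ∈ C, ‖T i x - T i y‖ ≤ ‖x - y‖)
    (hGm : MapsTo G C C) (hlam : ∀ n, lam n ∈ Set.Icc 0 1) (huC : ∀ n, u n ∈ C)
    (hrec : ∀ n, u (n + 1) = hsdmStep G (lam (n + 1)) (T (cyc N (n + 1)) (u n))) (n : ℕ) :
    ‖u (n + N) - compShift T N n (u n)‖ ≤ d * ∑ i ∈ range N, lam (n + i + 1) := by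
  have hstep (k : ℕ) :
      ‖u (n + (k + 1)) - T (cyc N (k + 1 + n)) (u (n + k))‖ ≤ d * lam (n + k + 1) := by
    have hTu := hTm _ (cyc_mem_Icc hN (n + k + 1)) (huC (n + k))
    rw [← add_assoc, hrec, show k + 1 + n = n + k + 1 by omega, hsdmStep_sub_self, norm_smul,
      Real.norm_of_nonneg (hlam _).1, mul_comm]
    exact mul_le_mul_of_nonneg_right (hbd _ (hGm hTu) _ hTu) (hlam _).1
  rw [mul_sum]
  exact norm_sub_foldl_range_le (F := fun i => T (cyc N (i + 1 + n)))
    (fun i => hTm _ (cyc_mem_Icc hN _)) (fun i => hT _ (cyc_mem_Icc hN _))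
    (v := fun k => u (n + k)) (fun k => huC _) hstep N

theorem norm_hsdm_shift_sub_le (hN : 0 < N) {d τ η : ℝ}
    (hbd : ∀ x ∈ C, ∀ y ∈ C, ‖x - y‖ ≤ d) (hTm : ∀ i ∈ Finset.Icc 1 N, MapsTo (T i) C C)
    (hT : ∀ i ∈ Finset.Icc 1 N, ∀ x ∈ C, ∀ y ∈ C, ‖T i x - T i y‖ ≤ ‖x - y‖)
    (hτ0 : 0 ≤ τ) (hτ1 : τ ≤ 1) (hGm : MapsTo G C C)
    (hG : ∀ x ∈ C, ∀ y ∈ C, ‖G x - G y‖ ≤ τ * ‖x - y‖)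
    (hlam : ∀ n, lam n ∈ Set.Icc 0 1) (huC : ∀ n, u n ∈ C)
    (hrec : ∀ n, u (n + 1) = hsdmStep G (lam (n + 1)) (T (cyc N (n + 1)) (u n)))
    {n₀ n : ℕ} (hn : n₀ + N ≤ n) (hprod : ∏ i ∈ Icc (n₀ + N) n, (1 - lam i * (1 - τ)) ≤ η)
    (hsum : ∑ i ∈ Icc n₀ n, |lam (i + N) - lam i| ≤ η) :
    ‖u (n + N) - u n‖ ≤ 2 * d * η := by
  have hd : 0 ≤ d := (norm_nonneg _).trans (hbd _ (huC 0) _ (huC 0))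
  have hq0 (i : ℕ) : 0 ≤ 1 - lam i * (1 - τ) := by nlinarith [(hlam i).1, (hlam i).2]
  have hq1 (i : ℕ) : 1 - lam i * (1 - τ) ≤ 1 := by nlinarith [(hlam i).1]
  have hunroll := le_prod_mul_add_sum_of_le_mul_add (a := fun m => ‖u (m + N) - u m‖)
    (b := fun i => d * |lam (i + N) - lam i|) hq0 hq1 (fun i => by positivity)
    (norm_hsdm_shift_sub_succ_le hN hbd hTm hT hτ0 hGm hG hlam huC hrec)
    (m₀ := n₀ + N - 1) (by omega : n₀ + N - 1 ≤ n)
  rw [show n₀ + N - 1 + 1 = n₀ + N by omega, ← mul_sum] at hunroll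
  have htail : ∑ i ∈ Icc (n₀ + N) n, |lam (i + N) - lam i| ≤ η :=
    (sum_le_sum_of_subset_of_nonneg (Icc_subset_Icc (by omega) le_rfl)
      fun _ _ _ => abs_nonneg _).trans hsum
  calc ‖u (n + N) - u n‖ ≤ _ := hunroll
    _ ≤ η * d + d * η := by
        have hη : 0 ≤ η := (prod_nonneg fun i _ => hq0 i).trans hprod
        gcongr
        exact hbd _ (huC _) _ (huC _)
    _ = 2 * d * η := by ring

end HSDM

theorem hsdm_family_asymptotic_regularity_cyclic_general
    {H : Type*} [NormedAddCommGroup H] [InnerProductSpace ℝ H]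
    (d : ℕ) (hd : 1 ≤ d)
    (C : Set H) (hcv : Convex ℝ C)
    (hbd : ∀ x ∈ C, ∀ y ∈ C, ‖x - y‖ ≤ (d : ℝ))
    (N : ℕ) (hN : 1 ≤ N) (T : ℕ → H → H)
    (hTm : ∀ i ∈ Finset.Icc 1 N, Set.MapsTo (T i) C C)
    (hT : ∀ i ∈ Finset.Icc 1 N, ∀ x ∈ C, ∀ y ∈ C, ‖T i x - T i y‖ ≤ ‖x - y‖)
    (τ : ℝ) (hτ0 : 0 ≤ τ) (hτ1 : τ < 1)
    (G : H → H) (hGm : Set.MapsTo G C C)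
    (hG : ∀ x ∈ C, ∀ y ∈ C, ‖G x - G y‖ ≤ τ * ‖x - y‖)
    (lam : ℕ → ℝ) (hlam : ∀ n, lam n ∈ Set.Ioc (0 : ℝ) 1)
    (χ : ℕ → ℕ) (hχ : ∀ k : ℕ, 1 ≤ k → ∀ n ≥ χ k, lam n ≤ 1 / (k : ℝ))
    (φ₃ : ℝ → ℕ → ℕ)
    (hφ₃ge : ∀ δ : ℝ, 0 < δ → ∀ n : ℕ, n ≤ φ₃ δ n)
    (hφ₃ : ∀ δ : ℝ, 0 < δ → ∀ n : ℕ, ∀ m ≥ φ₃ δ n,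
      ∏ i ∈ Finset.Icc n m, (1 - lam i * (1 - τ)) ≤ δ)
    (φ₄ : ℝ → ℕ)
    (hφ₄ : ∀ δ : ℝ, 0 < δ → ∀ m : ℕ,
      ∑ i ∈ Finset.Icc (φ₄ δ) m, |lam (i + N) - lam i| ≤ δ)
    (ρ : ℝ → ℝ) (hρpos : ∀ δ : ℝ, 0 < δ → 0 < ρ δ)
    (hρ : ∀ j < N, ∀ y ∈ C, ∀ δ : ℝ, 0 < δ → ‖compShift T N j y - y‖ ≤ ρ δ →
      ∀ i ∈ Finset.Icc 1 N, ‖T i y - y‖ ≤ δ)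
    (u : ℕ → H) (hu0 : u 0 ∈ C)
    (hrec : ∀ n, u (n + 1) = (1 - lam (n + 1)) • T (cyc N (n + 1)) (u n) +
      lam (n + 1) • G (T (cyc N (n + 1)) (u n))) :
    ∀ j < N, ∀ ε : ℝ, 0 < ε → ∀ n ≥ chiHat d N χ φ₃ φ₄ (ρ (ε / N)),
      ‖u n - compShift T N j (u n)‖ ≤ ε := by
  intro j hj ε hε n hn
  have hN' : 0 < N := hN
  have hd' : (0 : ℝ) < d := by exact_mod_cast hd
  have hlam' (n : ℕ) : lam n ∈ Set.Icc 0 1 := Set.Ioc_subset_Icc_self (hlam n)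
  have huC := hsdm_mem hN' hTm hcv hGm hlam' hu0 hrec
  have hεN : 0 < ε / N := by positivity
  set δ := ρ (ε / N)
  have hδ : 0 < δ := hρpos _ hεN
  have hη : 0 < δ / (4 * d) := by positivity
  have hn₃ := (le_max_left _ _).trans hn
  have hn₄ := (le_max_right _ _).trans hn
  have hshift : ‖u (n + N) - u n‖ ≤ δ / 2 := by
    have h := norm_hsdm_shift_sub_le hN' hbd hTm hT hτ0 hτ1.le hGm hG hlam' huC hrec
      ((hφ₃ge _ hη _).trans hn₃) (hφ₃ _ hη _ n hn₃) (hφ₄ _ hη n)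
    rwa [show 2 * (d : ℝ) * (δ / (4 * d)) = δ / 2 by field_simp; ring] at h
  have hK : 1 ≤ ⌈2 * (N : ℝ) * d / δ⌉₊ := Nat.one_le_ceil_iff.2 (by positivity)
  have horbit : ‖u (n + N) - compShift T N n (u n)‖ ≤ δ / 2 :=
    (norm_hsdm_sub_compShift_le hN' hbd hTm hT hGm hlam' huC hrec n).trans
      (mul_sum_le_half_of_le_inv_ceil hN' hd' hδ fun i _ => hχ _ hK _ (by omega))
  have hfix : ‖compShift T N (n % N) (u n) - u n‖ ≤ δ := by
    rw [compShift_mod, norm_sub_rev]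
    calc _ ≤ ‖u n - u (n + N)‖ + ‖u (n + N) - compShift T N n (u n)‖ :=
          norm_sub_le_norm_sub_add_norm_sub _ _ _
      _ ≤ δ := by rw [norm_sub_rev]; linarith
  have hTu := hρ (n % N) (Nat.mod_lt _ hN') (u n) (huC n) (ε / N) hεN hfix
  calc ‖u n - compShift T N j (u n)‖ ≤ N * (ε / N) :=
        norm_sub_compShift_le hN' hTm hT (huC n) hTu j
    _ = ε := by field_simp

/-- Quantitative asymptotic regularity of the hybrid steepest descent iteration with
respect to every cyclic-order composition of the finite family. -/
theorem hsdm_family_asymptotic_regularity_cyclic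
    {H : Type*} [NormedAddCommGroup H] [InnerProductSpace ℝ H] [CompleteSpace H]
    (d : ℕ) (hd : 1 ≤ d)
    (C : Set H) (hne : C.Nonempty) (hcl : IsClosed C) (hcv : Convex ℝ C)
    (hbd : ∀ x ∈ C, ∀ y ∈ C, ‖x - y‖ ≤ (d : ℝ))
    (N : ℕ) (hN : 1 ≤ N) (T : ℕ → H → H)
    (hTm : ∀ i ∈ Finset.Icc 1 N, Set.MapsTo (T i) C C)
    (hT : ∀ i ∈ Finset.Icc 1 N, ∀ x ∈ C, ∀ y ∈ C, ‖T i x - T i y‖ ≤ ‖x - y‖)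
    (τ : ℝ) (hτ0 : 0 ≤ τ) (hτ1 : τ < 1)
    (G : H → H) (hGm : Set.MapsTo G C C)
    (hG : ∀ x ∈ C, ∀ y ∈ C, ‖G x - G y‖ ≤ τ * ‖x - y‖)
    (lam : ℕ → ℝ) (hlam : ∀ n, lam n ∈ Set.Ioc (0 : ℝ) 1)
    (χ : ℕ → ℕ) (hχ : ∀ k : ℕ, 1 ≤ k → ∀ n ≥ χ k, lam n ≤ 1 / (k : ℝ))
    (φ₃ : ℝ → ℕ → ℕ)
    (hφ₃ge : ∀ δ : ℝ, 0 < δ → ∀ n : ℕ, n ≤ φ₃ δ n)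
    (hφ₃ : ∀ δ : ℝ, 0 < δ → ∀ n : ℕ, ∀ m ≥ φ₃ δ n,
      ∏ i ∈ Finset.Icc n m, (1 - lam i * (1 - τ)) ≤ δ)
    (φ₄ : ℝ → ℕ)
    (hφ₄ : ∀ δ : ℝ, 0 < δ → ∀ m : ℕ,
      ∑ i ∈ Finset.Icc (φ₄ δ) m, |lam (i + N) - lam i| ≤ δ)
    (ρ : ℝ → ℝ) (hρpos : ∀ δ : ℝ, 0 < δ → 0 < ρ δ)
    (hρ : ∀ j < N, ∀ y ∈ C, ∀ δ : ℝ, 0 < δ → ‖compShift T N j y - y‖ ≤ ρ δ →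
      ∀ i ∈ Finset.Icc 1 N, ‖T i y - y‖ ≤ δ)
    (u : ℕ → H) (hu0 : u 0 ∈ C)
    (hrec : ∀ n, u (n + 1) = (1 - lam (n + 1)) • T (cyc N (n + 1)) (u n) +
      lam (n + 1) • G (T (cyc N (n + 1)) (u n))) :
    ∀ j < N, ∀ ε : ℝ, 0 < ε → ∀ n ≥ chiHat d N χ φ₃ φ₄ (ρ (ε / N)),
      ‖u n - compShift T N j (u n)‖ ≤ ε :=
  hsdm_family_asymptotic_regularity_cyclic_general d hd C hcv hbd N hN T hTm hT τ hτ0 hτ1 G hGm hG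
    lam hlam χ hχ φ₃ hφ₃ge hφ₃ φ₄ hφ₄ ρ hρpos hρ u hu0 hrec
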